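/- arXiv:1903.00688 — 3 statements merged into one kernel-verified Lean document; each statement's English description precedes it below -/
import Mathlib

section
/- Consider pursuit-evasion in ℝⁿ with speeds bounded by a for Pursuer and b for Evader, where a > b > 0, initial positions x₀ ≠ y₀. Let θ = |y₀ - x₀|/(a - b) and define Pursuer's strategy u(t) = (y₀ - x₀)/θ + v(t), where v is Evader's control. Then (1) |u(t)| ≤ a whenever |v(t)| ≤ b, and (2) for any measurable v with |v(t)| ≤ b, the trajectories x(t) = x₀ + ∫₀ᵗ u and y(t) = y₀ + ∫₀ᵗ v satisfy x(θ) = y(θ). -/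
/-! The pursuer moves with the evader's velocity plus the constant drift `(y₀ - x₀)/θ`, so the
difference `y - x` shrinks linearly from `y₀ - x₀` and vanishes at time `θ`. The drift has norm
exactly `a - b`, leaving room `b` for copying the evader's velocity. -/

open MeasureTheory

theorem norm_inv_div_norm_smul {E : Type*} [NormedAddCommGroup E] [NormedSpace ℝ E]
    {d : E} (hd : d ≠ 0) (c : ℝ) : ‖(‖d‖ / c)⁻¹ • d‖ = |c| := by
  rw [inv_div, norm_smul, Real.norm_eq_abs, abs_div, abs_norm,
    div_mul_cancel₀ _ (norm_ne_zero_iff.2 hd)]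

theorem intervalIntegral.integral_inv_smul_add {E : Type*} [NormedAddCommGroup E]
    [NormedSpace ℝ E] [CompleteSpace E] {θ : ℝ} (hθ : θ ≠ 0) (d : E) {v : ℝ → E}
    (hv : IntervalIntegrable v volume 0 θ) :
    ∫ s in (0:ℝ)..θ, (θ⁻¹ • d + v s) = d + ∫ s in (0:ℝ)..θ, v s := by
  rw [intervalIntegral.integral_add intervalIntegrable_const hv, intervalIntegral.integral_const,
    sub_zero, smul_inv_smul₀ hθ]

theorem stmt_6_general (n : ℕ) (x₀ y₀ : EuclideanSpace ℝ (Fin n)) (a b : ℝ)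
    (hab : b < a) (hne : x₀ ≠ y₀)
    (θ : ℝ) (hθ : θ = ‖y₀ - x₀‖ / (a - b))
    (v : ℝ → EuclideanSpace ℝ (Fin n))
    (hv_meas : Measurable v)
    (hv : ∀ t : ℝ, ‖v t‖ ≤ b)
    (u : ℝ → EuclideanSpace ℝ (Fin n))
    (hu : ∀ t, u t = θ⁻¹ • (y₀ - x₀) + v t)
    (x y : ℝ → EuclideanSpace ℝ (Fin n))
    (hx : ∀ t, x t = x₀ + ∫ s in (0:ℝ)..t, u s)
    (hy : ∀ t, y t = y₀ + ∫ s in (0:ℝ)..t, v s) :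
    (∀ t : ℝ, ‖u t‖ ≤ a) ∧ x θ = y θ := by
  have hd : y₀ - x₀ ≠ 0 := sub_ne_zero.2 hne.symm
  have hdrift : ‖θ⁻¹ • (y₀ - x₀)‖ = a - b := by
    rw [hθ, norm_inv_div_norm_smul hd, abs_of_pos (sub_pos.2 hab)]
  have hθ0 : θ ≠ 0 := hθ ▸ div_ne_zero (norm_ne_zero_iff.2 hd) (sub_ne_zero.2 hab.ne')
  refine ⟨fun t => ?_, ?_⟩
  · calc ‖u t‖ = ‖θ⁻¹ • (y₀ - x₀) + v t‖ := by rw [hu]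
      _ ≤ (a - b) + b := norm_add_le_of_le hdrift.le (hv t)
      _ = a := sub_add_cancel a b
  · have hv_int : IntervalIntegrable v volume 0 θ :=
      intervalIntegrable_iff.2 <| IntegrableOn.of_bound measure_Ioc_lt_top
        hv_meas.aestronglyMeasurable b (ae_of_all _ hv)
    rw [hx, hy, funext hu, intervalIntegral.integral_inv_smul_add hθ0 _ hv_int, ← add_assoc,
      add_sub_cancel]

theorem stmt_6 (n : ℕ) (x₀ y₀ : EuclideanSpace ℝ (Fin n)) (a b : ℝ)
    (hb : 0 < b) (hab : b < a) (hne : x₀ ≠ y₀)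
    (θ : ℝ) (hθ : θ = ‖y₀ - x₀‖ / (a - b))
    (v : ℝ → EuclideanSpace ℝ (Fin n))
    (hv_meas : Measurable v)
    (hv : ∀ t : ℝ, ‖v t‖ ≤ b)
    (u : ℝ → EuclideanSpace ℝ (Fin n))
    (hu : ∀ t, u t = θ⁻¹ • (y₀ - x₀) + v t)
    (x y : ℝ → EuclideanSpace ℝ (Fin n))
    (hx : ∀ t, x t = x₀ + ∫ s in (0:ℝ)..t, u s)
    (hy : ∀ t, y t = y₀ + ∫ s in (0:ℝ)..t, v s) :
    (∀ t : ℝ, ‖u t‖ ≤ a) ∧ x θ = y θ :=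
  stmt_6_general n x₀ y₀ a b hab hne θ hθ v hv_meas hv u hu x y hx hy
end

section
/- Let R > 0, r > 0 with r < R. For each i ∈ ℕ, define T_i = √((R - r/(i+2))² - (R - r/(i+1))²). Then T_i ≥ r/(i+2) for all i, and consequently the series Σ_{i=0}^∞ T_i diverges. -/
theorem stmt_13 (R r : ℝ) (hr : 0 < r) (hrR : r < R)
    (T : ℕ → ℝ)
    (hT : ∀ i : ℕ, T i =
      Real.sqrt ((R - r / (i + 2)) ^ 2 - (R - r / (i + 1)) ^ 2)) :
    (∀ i : ℕ, r / (i + 2) ≤ T i) ∧ ¬ Summable T := by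
  have key : ∀ i : ℕ, r / (i + 2) ≤ T i := by
    intro i
    rw [hT i]
    have hn : (0:ℝ) ≤ (i:ℝ) := Nat.cast_nonneg i
    have h1 : (0:ℝ) < (i:ℝ) + 1 := by linarith
    have h2 : (0:ℝ) < (i:ℝ) + 2 := by linarith
    set n := (i:ℝ) with hn'
    have e1 : n + 1 ≠ 0 := h1.ne'
    have e2 : n + 2 ≠ 0 := h2.ne'
    have hd : (R - r/(n+2))^2 - (R - r/(n+1))^2
        = r/((n+1)*(n+2)) * (2*R - r/(n+1) - r/(n+2)) := by
      field_simp; ring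
    have h3 : r*(n+1)/(n+2) + r/(n+1) + r/(n+2) = r*(n+2)/(n+1) := by
      field_simp; ring
    have h4 : r*(n+2)/(n+1) ≤ 2*r := by
      rw [div_le_iff₀ h1]; nlinarith
    have hsum : r*(n+1)/(n+2) ≤ 2*R - r/(n+1) - r/(n+2) := by linarith
    have heq : (r/(n+2))^2 = r/((n+1)*(n+2)) * (r*(n+1)/(n+2)) := by
      field_simp
    have hfin : (r/(n+2))^2 ≤ (R - r/(n+2))^2 - (R - r/(n+1))^2 := by
      rw [hd, heq]
      exact mul_le_mul_of_nonneg_left hsum (by positivity)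
    calc r/(n+2) = Real.sqrt ((r/(n+2))^2) := (Real.sqrt_sq (by positivity)).symm
      _ ≤ _ := Real.sqrt_le_sqrt hfin
  refine ⟨key, fun hs => ?_⟩
  have hsum : Summable (fun i : ℕ => r / ((i:ℝ) + 2)) :=
    Summable.of_nonneg_of_le (fun i => by positivity) key hs
  have h5 : Summable (fun i : ℕ => ((i:ℝ) + 2)⁻¹) := by
    have := hsum.mul_left r⁻¹
    simpa [div_eq_mul_inv, ← mul_assoc, inv_mul_cancel₀ hr.ne'] using this
  have h6 : Summable (fun n : ℕ => ((n:ℝ))⁻¹) := by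
    rw [← summable_nat_add_iff 2]
    simpa [add_comm, add_assoc] using h5
  exact Real.not_summable_natCast_inv h6
end

section
/- Let E, P ∈ ℝ² be distinct points with E on the boundary of the closed disk of radius R centered at the origin (|E| = R) and P in the disk. Then there exists a point E'' strictly inside the disk (|E''| < R) with |E - E''| < |P - E|/2, and for any such E'', Pursuer starting at P with a 1-Lipschitz trajectory cannot catch Evader moving at unit speed along the straight segment from E to E''. -/
theorem stmt_17 (R : ℝ) (hR : 0 < R)
    (E P : EuclideanSpace ℝ (Fin 2)) (hne : E ≠ P)
    (hE : ‖E‖ = R) (hP : ‖P‖ ≤ R) :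
    (∃ E'' : EuclideanSpace ℝ (Fin 2), ‖E''‖ < R ∧ ‖E - E''‖ < ‖P - E‖ / 2) ∧
    (∀ E'' : EuclideanSpace ℝ (Fin 2), ‖E''‖ < R → ‖E - E''‖ < ‖P - E‖ / 2 →
      ∀ p : ℝ → EuclideanSpace ℝ (Fin 2),
        LipschitzOnWith 1 p (Set.Icc 0 ‖E - E''‖) → p 0 = P →
        ∀ t ∈ Set.Icc (0:ℝ) ‖E - E''‖,
          p t ≠ E + (t / ‖E'' - E‖) • (E'' - E)) := by
  have hPE : 0 < ‖P - E‖ := by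
    rw [norm_pos_iff, sub_ne_zero]; exact hne.symm
  constructor
  · -- take E'' = (1 - ε) • E with ε = min (1/2) (‖P-E‖/(4R))
    set ε : ℝ := min (1/2) (‖P - E‖ / (4 * R)) with hε
    have hε0 : 0 < ε := lt_min (by norm_num) (div_pos hPE (by linarith))
    have hε1 : ε ≤ 1/2 := min_le_left _ _
    refine ⟨(1 - ε) • E, ?_, ?_⟩
    · rw [norm_smul, hE, Real.norm_eq_abs, abs_of_pos (by linarith)]
      nlinarith
    · have : E - (1 - ε) • E = ε • E := by
        rw [sub_smul, one_smul]; module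
      rw [this, norm_smul, hE, Real.norm_eq_abs, abs_of_pos hε0]
      have h2 : ε ≤ ‖P - E‖ / (4 * R) := min_le_right _ _
      have h3 : ε * (4 * R) ≤ ‖P - E‖ := by
        rw [← le_div_iff₀ (by positivity)]; exact h2
      nlinarith
  · intro E'' _ hlt p hlip hp0 t ht heq
    obtain ⟨ht0, htT⟩ := ht
    have hdist : ‖p t - P‖ ≤ t := by
      have h2 := hlip.dist_le_mul t ⟨ht0, htT⟩ 0
        (Set.mem_Icc.mpr ⟨le_refl 0, by linarith⟩)
      rw [hp0, dist_eq_norm] at h2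
      simpa [Real.dist_eq, abs_of_nonneg ht0] using h2
    have hEt : ‖(E + (t / ‖E'' - E‖) • (E'' - E)) - E‖ ≤ t := by
      by_cases hEE : E'' = E
      · simp [hEE]; linarith
      · have hne' : ‖E'' - E‖ ≠ 0 := by
          simpa [sub_eq_zero] using hEE
        have hpos : 0 < ‖E'' - E‖ := lt_of_le_of_ne (norm_nonneg _) (Ne.symm hne')
        rw [add_sub_cancel_left, norm_smul, Real.norm_eq_abs,
          abs_of_nonneg (div_nonneg ht0 hpos.le), div_mul_cancel₀ _ hne']
    have key : ‖P - E‖ ≤ ‖P - p t‖ + ‖p t - E‖ := norm_sub_le_norm_sub_add_norm_sub _ _ _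
    have h1 : ‖P - p t‖ ≤ t := by rw [norm_sub_rev]; exact hdist
    have h2 : ‖p t - E‖ ≤ t := by rw [heq]; exact hEt
    linarith
end
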